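/- For k ≥ n² − n, the optimal revisit time R*(k) takes only two values: R*(k) = R*(n) = TSP* if n divides k, and R*(k) = R*(n+1) otherwise. -/

import Mathlib

/-- A closed walk with `k` visits on `n` targets, modeled as a `k`-periodic
sequence of targets in which consecutive visits are distinct and every
target is visited at least once in each period. -/
structure CWalk (n k : ℕ) where
  seq : ℕ → Fin n
  periodic : ∀ i, seq (i + k) = seq i
  step : ∀ i, seq i ≠ seq (i + 1)
  covers : ∀ d : Fin n, ∃ i < k, seq i = d

namespace CWalk

/-- Travel time from the `i`-th to the `j`-th visit. -/
noncomputable def tt {n k : ℕ} (c : Fin n → Fin n → ℝ) (W : CWalk n k) (i j : ℕ) : ℝ :=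
  ∑ t ∈ Finset.Ico i j, c (W.seq t) (W.seq (t + 1))

/-- Duration of one period of the walk. -/
noncomputable def duration {n k : ℕ} (c : Fin n → Fin n → ℝ) (W : CWalk n k) : ℝ :=
  W.tt c 0 k

/-- Revisit time of target `d`: the maximum time between consecutive visits to `d`. -/
noncomputable def RT {n k : ℕ} (c : Fin n → Fin n → ℝ) (W : CWalk n k) (d : Fin n) : ℝ :=
  sSup {T : ℝ | ∃ i j : ℕ, i < j ∧ W.seq i = d ∧ W.seq j = d ∧
    (∀ t, i < t → t < j → W.seq t ≠ d) ∧ T = W.tt c i j}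

/-- Revisit time of the walk: maximum revisit time over all targets. -/
noncomputable def R {n k : ℕ} (c : Fin n → Fin n → ℝ) (W : CWalk n k) : ℝ :=
  sSup {T : ℝ | ∃ d : Fin n, T = W.RT c d}

end CWalk

/-- Optimal revisit time over all closed walks with `k` visits. -/
noncomputable def Rstar (n : ℕ) (c : Fin n → Fin n → ℝ) (k : ℕ) : ℝ :=
  sInf {T : ℝ | ∃ W : CWalk n k, T = W.R c}

/-- Optimal TSP tour length: minimal duration of a closed walk with `n` visits
(each target is then visited exactly once). -/
noncomputable def TSPstar (n : ℕ) (c : Fin n → Fin n → ℝ) : ℝ :=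
  sInf {T : ℝ | ∃ W : CWalk n n, T = W.duration c}

/-!
Lower bounds. In a walk `W`, take a visit whose target needs the largest number of steps to come
back. Every other target is met before it comes back, so this return trip is a closed walk with
`L ≥ n` visits and duration at most `R(W)`. If `L = n`, every window of `n` consecutive visits is a
permutation of the targets, which forces `n ∣ k`. Skipping visits whose targets recur (triangle
inequality) shortens the trip to `n` visits, or to `n + 1` visits when `n ∤ k`. A walk with `n` or
`n + 1` visits meets some target only once per period, so its revisit time is its duration. Hence
`TSP* ≤ R(W)`, and `R*(n + 1) ≤ R(W)` when `n ∤ k`.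

Upper bounds. When `n ∣ k`, an `n`-visit walk repeated `k / n` times is a `k`-visit walk. Otherwise
write `k = n q + r` with `r ≤ q`, which `k ≥ n² - n` allows. Rotate an `(n + 1)`-visit walk so that
its first visit can be skipped, and go through its period `q` times, skipping the first visit in
`q - r` of the rounds. Every gap of the new walk is at most a gap of the old one or one period of
it.
-/

open Finset Function

theorem Nat.not_modEq_of_lt_of_lt_add {k a t : ℕ} (hat : a < t) (hta : t < a + k) :
    ¬ t ≡ a [MOD k] := fun h => by
  have := h.eq_of_abs_lt (by rw [abs_lt]; constructor <;> omega)
  omega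

namespace CWalk

variable {n k : ℕ} {c : Fin n → Fin n → ℝ}

def ofPeriodic (s : ℕ → Fin n) (hk : 0 < k) (hs : Periodic s k)
    (hstep : ∀ i, s i ≠ s (i + 1)) (hcov : ∀ d, ∃ i, s i = d) : CWalk n k where
  seq := s
  periodic := hs
  step := hstep
  covers d := by
    obtain ⟨i, hi⟩ := hcov d
    exact ⟨i % k, Nat.mod_lt i hk, (hs.map_mod_nat i).trans hi⟩

theorem seq_periodic (W : CWalk n k) : Periodic W.seq k := W.periodic

theorem period_pos (W : CWalk n k) : 0 < k := by
  obtain ⟨i, hi, -⟩ := W.covers (W.seq 0)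
  omega

theorem seq_add_mul (W : CWalk n k) (i m : ℕ) : W.seq (i + m * k) = W.seq i := by
  simpa using W.seq_periodic.nat_mul m i

theorem seq_eq_of_modEq (W : CWalk n k) {a b : ℕ} (h : a ≡ b [MOD k]) : W.seq a = W.seq b := by
  rw [← W.seq_periodic.map_mod_nat a, ← W.seq_periodic.map_mod_nat b]
  exact congrArg W.seq h

theorem tt_self (W : CWalk n k) (i : ℕ) : W.tt c i i = 0 := by
  simp [tt]

theorem tt_add_tt (W : CWalk n k) {i j l : ℕ} (hij : i ≤ j) (hjl : j ≤ l) :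
    W.tt c i j + W.tt c j l = W.tt c i l :=
  sum_Ico_consecutive _ hij hjl

theorem tt_succ_right (W : CWalk n k) {i j : ℕ} (hij : i ≤ j) :
    W.tt c i (j + 1) = W.tt c i j + c (W.seq j) (W.seq (j + 1)) :=
  sum_Ico_succ_top hij _

theorem tt_nonneg (hc : ∀ u v, u ≠ v → 0 ≤ c u v) (W : CWalk n k) (i j : ℕ) :
    0 ≤ W.tt c i j :=
  sum_nonneg fun t _ => hc _ _ (W.step t)

theorem tt_mono (hc : ∀ u v, u ≠ v → 0 ≤ c u v) (W : CWalk n k) {i j l : ℕ}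
    (hij : i ≤ j) (hjl : j ≤ l) : W.tt c i j ≤ W.tt c i l := by
  rw [← W.tt_add_tt hij hjl]
  linarith [W.tt_nonneg hc j l]

theorem tt_add_of_periodic (W : CWalk n k) {M : ℕ} (hM : Periodic W.seq M) (i j : ℕ) :
    W.tt c (i + M) (j + M) = W.tt c i j := by
  have hM' : ∀ t, W.seq (t + M) = W.seq t := hM
  simp only [tt, ← sum_Ico_add', add_right_comm _ M 1, hM']

theorem tt_window (W : CWalk n k) (i : ℕ) : W.tt c i (i + k) = W.duration c := by
  induction i with
  | zero => rw [zero_add]; rfl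
  | succ i ih =>
    have h₁ := W.tt_add_tt (c := c) (Nat.le_succ i) (show i + 1 ≤ i + 1 + k by omega)
    have h₂ := W.tt_add_tt (c := c) (show i ≤ i + k by omega) (show i + k ≤ i + 1 + k by omega)
    have h₃ := W.tt_add_of_periodic (c := c) W.seq_periodic i (i + 1)
    linarith

theorem c_le_tt (htri : ∀ u v w, c u w ≤ c u v + c v w) (W : CWalk n k) {i j : ℕ}
    (hij : i < j) : c (W.seq i) (W.seq j) ≤ W.tt c i j := by
  induction j, hij using Nat.le_induction with
  | base => rw [W.tt_succ_right le_rfl, tt_self, zero_add]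
  | succ j hij ih =>
    rw [W.tt_succ_right (by omega)]
    linarith [htri (W.seq i) (W.seq j) (W.seq (j + 1))]

theorem tt_le_tt_of_seq_eq_comp (htri : ∀ u v w, c u w ≤ c u v + c v w) {P : ℕ}
    {Y : CWalk n P} {Z : CWalk n k} {φ : ℕ → ℕ} (hφ : StrictMono φ)
    (hZ : ∀ i, Z.seq i = Y.seq (φ i)) {i j : ℕ} (hij : i ≤ j) :
    Z.tt c i j ≤ Y.tt c (φ i) (φ j) := by
  induction j, hij using Nat.le_induction with
  | base => rw [tt_self, tt_self]
  | succ j hij ih =>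
    rw [Z.tt_succ_right hij, hZ, hZ, ← Y.tt_add_tt (hφ.monotone hij) (hφ.monotone j.le_succ)]
    exact add_le_add ih (Y.c_le_tt htri (hφ j.lt_succ_self))

noncomputable def nextVisit (W : CWalk n k) (d : Fin n) (i : ℕ) : ℕ :=
  sInf {j | i < j ∧ W.seq j = d}

theorem nextVisit_spec (W : CWalk n k) (d : Fin n) (i : ℕ) :
    i < W.nextVisit d i ∧ W.seq (W.nextVisit d i) = d := by
  obtain ⟨o, -, ho⟩ := W.covers d
  have hmem : o + (i + 1) * k ∈ {j | i < j ∧ W.seq j = d} :=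
    ⟨by nlinarith [W.period_pos], (W.seq_periodic.nat_mul _ o).trans ho⟩
  exact Nat.sInf_mem ⟨_, hmem⟩

theorem nextVisit_le (W : CWalk n k) {d : Fin n} {i j : ℕ} (hij : i < j) (hj : W.seq j = d) :
    W.nextVisit d i ≤ j :=
  Nat.sInf_le ⟨hij, hj⟩

theorem seq_ne_of_lt_nextVisit (W : CWalk n k) {d : Fin n} {i t : ℕ} (hit : i < t)
    (ht : t < W.nextVisit d i) : W.seq t ≠ d :=
  fun h => Nat.notMem_of_lt_sInf ht ⟨hit, h⟩

theorem nextVisit_add_period (W : CWalk n k) (d : Fin n) (i : ℕ) :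
    W.nextVisit d (i + k) = W.nextVisit d i + k := by
  obtain ⟨hi, hd⟩ := W.nextVisit_spec d i
  obtain ⟨hi', hd'⟩ := W.nextVisit_spec d (i + k)
  refine le_antisymm (W.nextVisit_le (by omega) (by rw [W.periodic, hd])) ?_
  have : W.nextVisit d i ≤ W.nextVisit d (i + k) - k :=
    W.nextVisit_le (by omega) (by rwa [← W.periodic, Nat.sub_add_cancel (by omega)])
  omega

noncomputable def gap (W : CWalk n k) (i : ℕ) : ℕ :=
  W.nextVisit (W.seq i) i - i

theorem gap_periodic (W : CWalk n k) : Periodic W.gap k := fun i => by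
  have := (W.nextVisit_spec (W.seq i) i).1
  simp only [gap, W.periodic, nextVisit_add_period]
  omega

theorem exists_le_lt_nextVisit (W : CWalk n k) {d : Fin n} {o a : ℕ} (ho : W.seq o = d)
    (hoa : o ≤ a) : ∃ p ≤ a, W.seq p = d ∧ a < W.nextVisit d p := by
  induction a, hoa using Nat.le_induction with
  | base => exact ⟨o, le_rfl, ho, (W.nextVisit_spec d o).1⟩
  | succ a hoa ih =>
    obtain ⟨p, hpa, hp, hap⟩ := ih
    rcases (Nat.succ_le_of_lt hap).lt_or_eq with h | h
    · exact ⟨p, by omega, hp, h⟩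
    · refine ⟨a + 1, le_rfl, ?_, (W.nextVisit_spec d _).1⟩
      rw [Nat.succ_eq_add_one] at h
      rw [h]
      exact (W.nextVisit_spec d p).2

theorem exists_visit_of_gap_le (W : CWalk n k) {G a : ℕ} (hG : ∀ i, W.gap i ≤ G) (ha : k ≤ a)
    (d : Fin n) : ∃ t, a < t ∧ t ≤ a + G ∧ W.seq t = d := by
  obtain ⟨o, hok, ho⟩ := W.covers d
  obtain ⟨p, hpa, hp, hap⟩ := W.exists_le_lt_nextVisit ho (by omega : o ≤ a)
  have := hG p
  rw [gap, hp] at this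
  exact ⟨W.nextVisit d p, hap, by omega, (W.nextVisit_spec d p).2⟩

theorem le_add_period_of_forall_ne (W : CWalk n k) {d : Fin n} {i j : ℕ} (hi : W.seq i = d)
    (hfree : ∀ t, i < t → t < j → W.seq t ≠ d) : j ≤ i + k := by
  by_contra h
  exact hfree (i + k) (by have := W.period_pos; omega) (by omega) (by rw [W.periodic, hi])

theorem tt_le_duration (hc : ∀ u v, u ≠ v → 0 ≤ c u v) (W : CWalk n k) {i j : ℕ}
    (hij : i ≤ j) (hj : j ≤ i + k) : W.tt c i j ≤ W.duration c :=
  W.tt_window i ▸ W.tt_mono hc hij hj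

theorem le_RT (hc : ∀ u v, u ≠ v → 0 ≤ c u v) (W : CWalk n k) {d : Fin n} {i j : ℕ}
    (hij : i < j) (hi : W.seq i = d) (hj : W.seq j = d)
    (hfree : ∀ t, i < t → t < j → W.seq t ≠ d) : W.tt c i j ≤ W.RT c d := by
  refine le_csSup ⟨W.duration c, ?_⟩ ⟨i, j, hij, hi, hj, hfree, rfl⟩
  rintro _ ⟨i, j, hij, hi, -, hfree, rfl⟩
  exact W.tt_le_duration hc hij.le (W.le_add_period_of_forall_ne hi hfree)

theorem RT_le (W : CWalk n k) {d : Fin n} {B : ℝ}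
    (h : ∀ i j, i < j → W.seq i = d → W.seq j = d → (∀ t, i < t → t < j → W.seq t ≠ d) →
      W.tt c i j ≤ B) : W.RT c d ≤ B := by
  obtain ⟨o, -, ho⟩ := W.covers d
  obtain ⟨hlt, hd⟩ := W.nextVisit_spec d o
  refine csSup_le ⟨_, o, _, hlt, ho, hd, fun t h₁ h₂ => W.seq_ne_of_lt_nextVisit h₁ h₂, rfl⟩ ?_
  rintro _ ⟨i, j, hij, hi, hj, hfree, rfl⟩
  exact h i j hij hi hj hfree

theorem RT_le_duration (hc : ∀ u v, u ≠ v → 0 ≤ c u v) (W : CWalk n k) (d : Fin n) :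
    W.RT c d ≤ W.duration c :=
  W.RT_le fun _ _ hij hi _ hfree =>
    W.tt_le_duration hc hij.le (W.le_add_period_of_forall_ne hi hfree)

theorem RT_le_R (hc : ∀ u v, u ≠ v → 0 ≤ c u v) (W : CWalk n k) (d : Fin n) :
    W.RT c d ≤ W.R c :=
  le_csSup ⟨W.duration c, by rintro _ ⟨e, rfl⟩; exact W.RT_le_duration hc e⟩ ⟨d, rfl⟩

theorem R_le (W : CWalk n k) {B : ℝ} (h : ∀ d, W.RT c d ≤ B) : W.R c ≤ B :=
  csSup_le ⟨_, W.seq 0, rfl⟩ (by rintro _ ⟨d, rfl⟩; exact h d)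

theorem tt_le_R (hc : ∀ u v, u ≠ v → 0 ≤ c u v) (W : CWalk n k) {i j : ℕ} (hij : i < j)
    (hj : W.seq j = W.seq i) (hfree : ∀ t, i < t → t < j → W.seq t ≠ W.seq i) :
    W.tt c i j ≤ W.R c :=
  (W.le_RT hc hij rfl hj hfree).trans (W.RT_le_R hc _)

theorem tt_nextVisit_le_R (hc : ∀ u v, u ≠ v → 0 ≤ c u v) (W : CWalk n k) (i : ℕ) :
    W.tt c i (W.nextVisit (W.seq i) i) ≤ W.R c :=
  W.tt_le_R hc (W.nextVisit_spec _ i).1 (W.nextVisit_spec _ i).2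
    fun _ h₁ h₂ => W.seq_ne_of_lt_nextVisit h₁ h₂

theorem R_le_duration (hc : ∀ u v, u ≠ v → 0 ≤ c u v) (W : CWalk n k) :
    W.R c ≤ W.duration c :=
  W.R_le (W.RT_le_duration hc)

theorem R_nonneg (hc : ∀ u v, u ≠ v → 0 ≤ c u v) (W : CWalk n k) : 0 ≤ W.R c :=
  (W.tt_nonneg hc _ _).trans (W.tt_nextVisit_le_R hc 0)

theorem R_le_of_forall_return (hc : ∀ u v, u ≠ v → 0 ≤ c u v) (W : CWalk n k) {B : ℝ}
    (h : ∀ i, ∃ j, i < j ∧ W.seq j = W.seq i ∧ W.tt c i j ≤ B) : W.R c ≤ B := by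
  refine W.R_le fun d => W.RT_le fun i j hij hi hj hfree => ?_
  obtain ⟨j', hij', hj', hB⟩ := h i
  have : j ≤ j' := by
    by_contra hlt
    exact hfree j' hij' (by omega) (hj'.trans hi)
  exact (W.tt_mono hc hij.le this).trans hB

/-- Some target is visited only once per period, and its revisit time is the whole period. -/
theorem duration_le_R (hc : ∀ u v, u ≠ v → 0 ≤ c u v) (W : CWalk n k) (hk : k < 2 * n) :
    W.duration c ≤ W.R c := by
  classical
  obtain ⟨d, -, hd⟩ := exists_card_fiber_lt_of_card_lt_mul (s := range k) (t := univ)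
    (f := W.seq) (n := 2) (by simpa [mul_comm] using hk)
  obtain ⟨o, hok, rfl⟩ := W.covers d
  rw [← W.tt_window o]
  refine W.tt_le_R hc (by have := W.period_pos; omega) (W.periodic o) fun t hot hto ht => ?_
  have hne : t % k ≠ o := fun h =>
    Nat.not_modEq_of_lt_of_lt_add hot hto (h.trans (Nat.mod_eq_of_lt hok).symm)
  have hsub : ({o, t % k} : Finset ℕ) ⊆ {x ∈ range k | W.seq x = W.seq o} := by
    intro x hx
    simp only [mem_insert, mem_singleton] at hx
    rcases hx with rfl | rfl
    · simpa using hok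
    · simpa [Nat.mod_lt t W.period_pos, W.seq_periodic.map_mod_nat] using ht
  have := card_le_card hsub
  rw [card_pair (Ne.symm hne)] at this
  omega

end CWalk

section Optimal

variable {n k : ℕ} {c : Fin n → Fin n → ℝ}

theorem Rstar_le_R (hc : ∀ u v, u ≠ v → 0 ≤ c u v) (W : CWalk n k) : Rstar n c k ≤ W.R c :=
  csInf_le ⟨0, by rintro _ ⟨V, rfl⟩; exact V.R_nonneg hc⟩ ⟨W, rfl⟩

theorem le_Rstar (W₀ : CWalk n k) {B : ℝ} (h : ∀ W : CWalk n k, B ≤ W.R c) : B ≤ Rstar n c k :=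
  le_csInf ⟨_, W₀, rfl⟩ (by rintro _ ⟨W, rfl⟩; exact h W)

theorem Rstar_le_Rstar (hc : ∀ u v, u ≠ v → 0 ≤ c u v) {k' : ℕ} (Y₀ : CWalk n k')
    (h : ∀ Y : CWalk n k', ∃ Z : CWalk n k, Z.R c ≤ Y.R c) : Rstar n c k ≤ Rstar n c k' :=
  le_csInf ⟨_, Y₀, rfl⟩ <| by
    rintro _ ⟨Y, rfl⟩
    obtain ⟨Z, hZ⟩ := h Y
    exact (Rstar_le_R hc Z).trans hZ

theorem Rstar_of_isEmpty [IsEmpty (CWalk n k)] : Rstar n c k = 0 := by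
  simp [Rstar]

theorem TSPstar_le_duration (hc : ∀ u v, u ≠ v → 0 ≤ c u v) (W : CWalk n n) :
    TSPstar n c ≤ W.duration c :=
  csInf_le ⟨0, by rintro _ ⟨V, rfl⟩; exact V.tt_nonneg hc _ _⟩ ⟨W, rfl⟩

theorem CWalk.R_eq_duration (hc : ∀ u v, u ≠ v → 0 ≤ c u v) (W : CWalk n n) :
    W.R c = W.duration c :=
  (W.R_le_duration hc).antisymm (W.duration_le_R hc (by have := W.period_pos; omega))

theorem Rstar_self_eq_TSPstar (hc : ∀ u v, u ≠ v → 0 ≤ c u v) : Rstar n c n = TSPstar n c := by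
  simp only [Rstar, TSPstar, CWalk.R_eq_duration hc]

end Optimal

namespace CWalk

variable {n k : ℕ} {c : Fin n → Fin n → ℝ}

theorem exists_walk_duration_le_R (hc : ∀ u v, u ≠ v → 0 ≤ c u v) (W : CWalk n k) {i L : ℕ}
    (hL : 0 < L) (hret : W.seq (i + L) = W.seq i)
    (hfree : ∀ t, i < t → t < i + L → W.seq t ≠ W.seq i)
    (hcov : ∀ d, ∃ t, i ≤ t ∧ t < i + L ∧ W.seq t = d) :
    ∃ V : CWalk n L, V.duration c ≤ W.R c := by
  have hnext : ∀ t, W.seq (i + (t + 1) % L) = W.seq (i + t % L + 1) := fun t => by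
    rw [← Nat.mod_add_mod]
    rcases (Nat.succ_le_of_lt (Nat.mod_lt t hL)).lt_or_eq with h | h
    · rw [Nat.mod_eq_of_lt h, add_assoc]
    · rw [Nat.succ_eq_add_one] at h
      rw [h, Nat.mod_self, add_zero, add_assoc, h, hret]
  let V : CWalk n L := ofPeriodic (fun t => W.seq (i + t % L)) hL
    (fun t => by simp only [Nat.add_mod_right])
    (fun t => by simp only [hnext]; exact W.step _)
    (fun d => by
      obtain ⟨t, h₁, h₂, h₃⟩ := hcov d
      refine ⟨t - i, ?_⟩
      simp only [Nat.mod_eq_of_lt (by omega : t - i < L), Nat.add_sub_cancel' h₁, h₃])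
  have hV : V.duration c = ∑ t ∈ Ico 0 L, c (W.seq (t + i)) (W.seq (t + i + 1)) :=
    show V.tt c 0 L = _ from sum_congr rfl fun t ht => by
      simp only [V, ofPeriodic, hnext, Nat.mod_eq_of_lt (mem_Ico.1 ht).2, add_comm i t]
  refine ⟨V, ?_⟩
  rw [hV, sum_Ico_add' (fun t => c (W.seq t) (W.seq (t + 1))), zero_add, add_comm L i]
  exact W.tt_le_R hc (by omega) hret hfree

theorem exists_max_gap (W : CWalk n k) : ∃ i₀, k ≤ i₀ ∧ ∀ i, W.gap i ≤ W.gap i₀ := by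
  obtain ⟨i₁, -, hmax⟩ := (range k).exists_max_image W.gap ⟨0, mem_range.2 W.period_pos⟩
  refine ⟨i₁ + k, le_add_self, fun i => ?_⟩
  rw [W.gap_periodic, ← W.gap_periodic.map_mod_nat i]
  exact hmax _ (mem_range.2 (Nat.mod_lt i W.period_pos))

theorem image_Ioc_eq_univ (W : CWalk n k) {a G : ℕ}
    (h : ∀ d, ∃ t, a < t ∧ t ≤ a + G ∧ W.seq t = d) : (Ioc a (a + G)).image W.seq = univ :=
  eq_univ_of_forall fun d => by
    obtain ⟨t, h₁, h₂, h₃⟩ := h d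
    exact mem_image.2 ⟨t, mem_Ioc.2 ⟨h₁, h₂⟩, h₃⟩

theorem le_of_forall_visit (W : CWalk n k) {a G : ℕ}
    (h : ∀ d, ∃ t, a < t ∧ t ≤ a + G ∧ W.seq t = d) : n ≤ G := by
  simpa [W.image_Ioc_eq_univ h] using (Ioc a (a + G)).card_image_le (f := W.seq)

/-- If every target returns within `n` steps, every window of `n` consecutive visits is a
permutation of the targets, so the walk is eventually `n`-periodic as well as `k`-periodic. -/
theorem dvd_of_gap_le (W : CWalk n k) (hG : ∀ i, W.gap i ≤ n) : n ∣ k := by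
  have hvisit := fun a (ha : k ≤ a) => W.exists_visit_of_gap_le hG ha
  have hn : 0 < n := Fin.pos (W.seq 0)
  have hinj : ∀ a, k ≤ a → Set.InjOn W.seq (Ioc a (a + n)) := fun a ha => by
    rw [← card_image_iff, W.image_Ioc_eq_univ (hvisit a ha)]
    simp
  have hper : Periodic (fun t => W.seq (k + 1 + t)) n := fun t => by
    obtain ⟨t', h₁, h₂, h₃⟩ := hvisit (k + 1 + t) (by omega) (W.seq (k + 1 + t))
    rcases h₂.lt_or_eq with h₂ | rfl
    · have := hinj (k + t) (by omega) (by simp; omega) (by simp; omega) h₃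
      omega
    · simpa [add_assoc] using h₃
  have hmod := hper.nat_mul (k / n) (k % n)
  rw [Nat.cast_id, Nat.mod_add_div', W.periodic] at hmod
  have := Nat.mod_lt k hn
  have := hinj k le_rfl (by simp; omega) (by simp; omega) hmod.symm
  exact Nat.dvd_of_mod_eq_zero (by omega)

/-- The return trip of maximal length in steps meets every target. -/
theorem exists_return_trip_duration_le_R (hc : ∀ u v, u ≠ v → 0 ≤ c u v) (W : CWalk n k) :
    ∃ L, n ≤ L ∧ (L = n → n ∣ k) ∧ ∃ V : CWalk n L, V.duration c ≤ W.R c := by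
  obtain ⟨i₀, hi₀, hmax⟩ := W.exists_max_gap
  have hvisit := W.exists_visit_of_gap_le hmax hi₀
  obtain ⟨hlt, hret⟩ := W.nextVisit_spec (W.seq i₀) i₀
  have hL : i₀ + W.gap i₀ = W.nextVisit (W.seq i₀) i₀ := by simp only [gap]; omega
  refine ⟨W.gap i₀, W.le_of_forall_visit hvisit,
    fun h => W.dvd_of_gap_le fun i => (hmax i).trans h.le, ?_⟩
  refine W.exists_walk_duration_le_R hc (by simp only [gap]; omega) (by rw [hL, hret])
    (fun t h₁ h₂ => W.seq_ne_of_lt_nextVisit h₁ (hL ▸ h₂)) fun d => ?_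
  obtain ⟨t, h₁, h₂, h₃⟩ := hvisit d
  rcases h₂.lt_or_eq with h₂ | rfl
  · exact ⟨t, h₁.le, h₂, h₃⟩
  · exact ⟨i₀, le_rfl, by omega, by rw [← h₃, hL, hret]⟩

def rot (W : CWalk n k) (s : ℕ) : CWalk n k :=
  ofPeriodic (fun t => W.seq (t + s)) W.period_pos
    (fun t => by simp only [add_right_comm t k s, W.periodic])
    (fun t => by simp only [add_right_comm t 1 s]; exact W.step _)
    (fun d => by
      obtain ⟨i, -, rfl⟩ := W.covers d
      refine ⟨i + (k - 1) * s, ?_⟩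
      rw [add_assoc, ← Nat.succ_mul, Nat.succ_eq_add_one, Nat.sub_add_cancel W.period_pos,
        mul_comm, seq_add_mul])

theorem tt_rot (W : CWalk n k) (s i j : ℕ) : (W.rot s).tt c i j = W.tt c (i + s) (j + s) := by
  simp only [tt, rot, ofPeriodic, ← sum_Ico_add', add_right_comm _ 1 s]

theorem duration_rot (W : CWalk n k) (s : ℕ) : (W.rot s).duration c = W.duration c := by
  rw [duration, tt_rot, zero_add, add_comm k s, tt_window]

theorem R_rot_le (hc : ∀ u v, u ≠ v → 0 ≤ c u v) (W : CWalk n k) (s : ℕ) :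
    (W.rot s).R c ≤ W.R c := by
  refine R_le _ fun d => RT_le _ fun i j hij hi hj hfree => ?_
  simp only [rot, ofPeriodic] at hi hj hfree
  rw [tt_rot]
  refine W.tt_le_R hc (by omega) (hj.trans hi.symm) fun t h₁ h₂ => ?_
  have := hfree (t - s) (by omega) (by omega)
  rwa [Nat.sub_add_cancel (by omega), ← hi] at this

/-- The first visit of a period can be skipped: its target recurs later in the period and,
by the triangle inequality, going straight from the last visit to the second one is no longer
than going through it. -/
def CanDropFirst (W : CWalk n k) : Prop :=
  W.seq (k - 1) ≠ W.seq 1 ∧ ∃ j, 0 < j ∧ j < k ∧ W.seq j = W.seq 0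

theorem le_two_of_periodic_two (W : CWalk n k) {a : ℕ}
    (h : Periodic (fun t => W.seq (a + t)) 2) : n ≤ 2 := by
  have hsub : (univ : Finset (Fin n)) ⊆ {W.seq a, W.seq (a + 1)} := fun d _ => by
    obtain ⟨o, -, rfl⟩ := W.covers d
    have hle : a ≤ o + a * k := by
      have := Nat.le_mul_of_pos_right a W.period_pos
      omega
    have := h.map_mod_nat (o + a * k - a)
    simp only [Nat.add_sub_cancel' hle, seq_add_mul] at this
    rw [← this]
    rcases Nat.mod_two_eq_zero_or_one (o + a * k - a) with h₂ | h₂ <;> simp [h₂]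
  simpa using (card_le_card hsub).trans card_le_two

/-- If no visit with a recurring target could be skipped, the walk would alternate between two
targets from the first such visit on. -/
theorem exists_rot_canDropFirst (hn : 3 ≤ n) (hk : n < k) (W : CWalk n k) :
    ∃ s, (W.rot s).CanDropFirst := by
  suffices ∃ p, 0 < p ∧ (∃ j, 0 < j ∧ j < k ∧ W.seq (p + j) = W.seq p) ∧
      W.seq (p - 1) ≠ W.seq (p + 1) by
    obtain ⟨p, hp, ⟨j, hj₀, hjk, hj⟩, hne⟩ := this
    refine ⟨p, ?_, j, hj₀, hjk, ?_⟩
    · simp only [rot, ofPeriodic]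
      rwa [show k - 1 + p = p - 1 + k by omega, W.periodic, add_comm 1 p]
    · simpa [rot, ofPeriodic, add_comm] using hj
  by_contra! h
  obtain ⟨a, b, hab, heq⟩ :=
    Fintype.exists_ne_map_eq_of_card_lt (fun i : Fin k => W.seq i) (by simpa using hk)
  have hrep : ∃ p, 0 < p ∧ ∃ j, 0 < j ∧ j < k ∧ W.seq (p + j) = W.seq p := by
    rcases lt_or_gt_of_ne (Fin.val_ne_of_ne hab) with hlt | hlt
    · refine ⟨a + k, by omega, b - a, by omega, by omega, ?_⟩
      rw [show a + k + (b - a) = b + k by omega, W.periodic, W.periodic]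
      exact heq.symm
    · refine ⟨b + k, by omega, a - b, by omega, by omega, ?_⟩
      rw [show b + k + (a - b) = a + k by omega, W.periodic, W.periodic]
      exact heq
  obtain ⟨p, hp, hrep⟩ := hrep
  have hall : ∀ t, ∃ j, 0 < j ∧ j < k ∧ W.seq (p + t + j) = W.seq (p + t) := by
    intro t
    induction t with
    | zero => exact hrep
    | succ t ih =>
      refine ⟨k - 2, by omega, by omega, ?_⟩
      rw [show p + (t + 1) + (k - 2) = p + t - 1 + k by omega, W.periodic, h _ (by omega) ih]
      rfl
  have halt : Periodic (fun t => W.seq (p - 1 + t)) 2 := fun t => by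
    simp only
    rw [show p - 1 + (t + 2) = p + t + 1 by omega, ← h _ (by omega) (hall t)]
    congr 1
    omega
  have := W.le_two_of_periodic_two halt
  omega

end CWalk

section NthPeriodic

variable {p : ℕ → Prop} [DecidablePred p] {M : ℕ}

theorem Nat.nth_add_count_of_periodic (hp : Periodic p M) (hinf : (Set.ofPred p).Infinite)
    (i : ℕ) : Nat.nth p (i + Nat.count p M) = Nat.nth p i + M := by
  have hcount : Nat.count p (Nat.nth p i + M) = i + Nat.count p M := by
    have hshift : Nat.count (fun t => p (t + M)) (Nat.nth p i) = Nat.count p (Nat.nth p i) := by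
      congr 1
      exact funext hp
    rw [Nat.count_add', hshift, Nat.count_nth_of_infinite hinf]
  rw [← hcount, Nat.nth_count]
  rw [hp]
  exact Nat.nth_mem_of_infinite hinf i

theorem Nat.nth_succ_eq_add_one_or_add_two (hinf : (Set.ofPred p).Infinite)
    (h : ∀ t, p t → ¬ p (t + 1) → p (t + 2)) (i : ℕ) :
    Nat.nth p (i + 1) = Nat.nth p i + 1 ∨
      ¬ p (Nat.nth p i + 1) ∧ Nat.nth p (i + 1) = Nat.nth p i + 2 := by
  have hx := Nat.nth_mem_of_infinite hinf i
  have hy := Nat.nth_mem_of_infinite hinf (i + 1)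
  have hlt := Nat.nth_strictMono hinf (Nat.lt_add_one i)
  have hle : ∀ a, p a → Nat.nth p i < a → Nat.nth p (i + 1) ≤ a := fun a ha hia => by
    by_contra h'
    have := Nat.le_nth_of_lt_nth_succ (not_le.1 h') ha
    omega
  by_cases h₁ : p (Nat.nth p i + 1)
  · exact Or.inl (by have := hle _ h₁ (by omega); omega)
  · have := hle _ (h _ hx h₁) (by omega)
    have : Nat.nth p (i + 1) ≠ Nat.nth p i + 1 := fun e => h₁ (e ▸ hy)
    exact Or.inr ⟨h₁, by omega⟩

end NthPeriodic

namespace CWalk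

variable {n k P M : ℕ} {c : Fin n → Fin n → ℝ}

theorem exists_seq_eq_nth (Y : CWalk n P) (keep : ℕ → Prop) [DecidablePred keep]
    (hkeep : Periodic keep M) (hY : Periodic Y.seq M) (hcount : Nat.count keep M = k)
    (hk : 0 < k) (hinf : (Set.ofPred keep).Infinite)
    (hgap : ∀ t, keep t → ¬ keep (t + 1) → keep (t + 2) ∧ Y.seq t ≠ Y.seq (t + 2))
    (hcov : ∀ d, ∃ t, keep t ∧ Y.seq t = d) :
    ∃ Z : CWalk n k, ∀ i, Z.seq i = Y.seq (Nat.nth keep i) := by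
  refine ⟨ofPeriodic (fun i => Y.seq (Nat.nth keep i)) hk (fun i => ?_) (fun i => ?_)
    (fun d => ?_), fun _ => rfl⟩
  · simp only [← hcount, Nat.nth_add_count_of_periodic hkeep hinf, hY _]
  · rcases Nat.nth_succ_eq_add_one_or_add_two hinf (fun t ht h₁ => (hgap t ht h₁).1) i with
      h | ⟨h₁, h⟩
    · simp only [h]
      exact Y.step _
    · simp only [h]
      exact (hgap _ (Nat.nth_mem_of_infinite hinf i) h₁).2
  · obtain ⟨t, ht, rfl⟩ := hcov d
    exact ⟨Nat.count keep t, by simp only [Nat.nth_count ht]⟩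

theorem R_le_of_seq_eq_nth (hc : ∀ u v, u ≠ v → 0 ≤ c u v)
    (htri : ∀ u v w, c u w ≤ c u v + c v w) {Y : CWalk n P} {Z : CWalk n k}
    {keep : ℕ → Prop} [DecidablePred keep] (hinf : (Set.ofPred keep).Infinite)
    (hZ : ∀ i, Z.seq i = Y.seq (Nat.nth keep i)) {B : ℝ}
    (h : ∀ x, ∃ y, x < y ∧ keep y ∧ Y.seq y = Y.seq x ∧ Y.tt c x y ≤ B) : Z.R c ≤ B :=
  Z.R_le_of_forall_return hc fun i => by
    obtain ⟨y, hxy, hy, hYy, hB⟩ := h (Nat.nth keep i)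
    have hi : i < Nat.count keep y := by
      rw [← Nat.count_nth_of_infinite hinf i]
      exact Nat.count_strict_mono (Nat.nth_mem_of_infinite hinf i) hxy
    refine ⟨Nat.count keep y, hi, by rw [hZ, hZ, Nat.nth_count hy, hYy], ?_⟩
    calc Z.tt c i (Nat.count keep y)
        ≤ Y.tt c (Nat.nth keep i) (Nat.nth keep (Nat.count keep y)) :=
          tt_le_tt_of_seq_eq_comp htri (Nat.nth_strictMono hinf) hZ hi.le
      _ ≤ B := by rwa [Nat.nth_count hy]

end CWalk

/-- Within every `q` consecutive periods of length `P`, the times that are multiples of `P` are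
kept only in the first `r` periods. -/
def keepPattern (P r q t : ℕ) : Prop :=
  t % P ≠ 0 ∨ t % (P * q) < P * r

instance (P r q : ℕ) : DecidablePred (keepPattern P r q) := fun t => by
  unfold keepPattern
  infer_instance

theorem keepPattern_periodic (P r q : ℕ) : Periodic (keepPattern P r q) (P * q) := fun t => by
  simp only [keepPattern, Nat.add_mul_mod_self_left, Nat.add_mod_right]

theorem infinite_keepPattern {P : ℕ} (hP : 2 ≤ P) (r q : ℕ) :
    (Set.ofPred (keepPattern P r q)).Infinite :=
  Set.infinite_of_forall_exists_gt fun a =>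
    ⟨P * a + 1, Or.inl (by rw [Nat.mul_add_mod, Nat.mod_eq_of_lt hP]; omega), by nlinarith⟩

theorem count_keepPattern {P r q : ℕ} (hP : 0 < P) (hrq : r ≤ q) :
    Nat.count (keepPattern P r q) (P * q) = (P - 1) * q + r := by
  suffices ∀ b ≤ q, Nat.count (keepPattern P r q) (P * b) = (P - 1) * b + min b r by
    rw [this q le_rfl, min_eq_right hrq]
  intro b hb
  induction b with
  | zero => simp
  | succ b ih =>
    obtain ⟨P', rfl⟩ : ∃ P', P = P' + 1 := ⟨P - 1, by omega⟩
    have hrest : Nat.count (fun j => keepPattern (P' + 1) r q ((P' + 1) * b + (j + 1))) P' = P' :=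
      Nat.count_iff_forall.2 fun j hj => Or.inl (by
        rw [Nat.mul_add_mod, Nat.mod_eq_of_lt (by omega)]
        omega)
    have hfirst : keepPattern (P' + 1) r q ((P' + 1) * b + 0) ↔ b < r := by
      rw [add_zero, keepPattern, Nat.mul_mod_right,
        Nat.mod_eq_of_lt (Nat.mul_lt_mul_left hP |>.2 (by omega)), Nat.mul_lt_mul_left hP]
      simp
    rw [Nat.mul_succ, Nat.count_add, ih (by omega), Nat.count_succ', hrest]
    simp only [hfirst, Nat.add_sub_cancel]
    split_ifs <;> simp only [Nat.mul_succ] <;> omega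

namespace CWalk

variable {n k P : ℕ} {c : Fin n → Fin n → ℝ}

theorem CanDropFirst.three_le {Y : CWalk n P} (hY : Y.CanDropFirst) : 3 ≤ P := by
  obtain ⟨hne, j, hj₀, hjP, -⟩ := hY
  by_contra h
  obtain rfl : P = 2 := by omega
  exact hne rfl

theorem CanDropFirst.exists_walk {Y : CWalk n P} (hY : Y.CanDropFirst) {r q : ℕ} (hrq : r ≤ q)
    (hk : (P - 1) * q + r = k) (hk₀ : 0 < k) :
    ∃ Z : CWalk n k, ∀ i, Z.seq i = Y.seq (Nat.nth (keepPattern P r q) i) := by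
  have hP := hY.three_le
  obtain ⟨hne, j, hj₀, hjP, hj⟩ := hY
  refine Y.exists_seq_eq_nth _ (keepPattern_periodic P r q)
    (fun t => by rw [mul_comm, seq_add_mul]) (by rw [count_keepPattern (by omega) hrq, hk]) hk₀
    (infinite_keepPattern (by omega) r q) (fun t _ ht => ?_) (fun d => ?_)
  · have h₀ : t + 1 ≡ 0 [MOD P] := by
      simp only [keepPattern, not_or, not_not] at ht
      simp [Nat.ModEq, ht.1]
    have h₁ : t ≡ P - 1 [MOD P] := Nat.ModEq.add_right_cancel' 1 <| h₀.trans <| by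
      simp [Nat.sub_add_cancel (by omega : 1 ≤ P), Nat.ModEq]
    have h₂ : t + 2 ≡ 1 [MOD P] := h₀.add_right 1
    refine ⟨Or.inl ?_, by rwa [Y.seq_eq_of_modEq h₁, Y.seq_eq_of_modEq h₂]⟩
    rw [show (t + 2) % P = 1 % P from h₂, Nat.mod_eq_of_lt (by omega)]
    omega
  · obtain ⟨i, -, rfl⟩ := Y.covers d
    by_cases hi : keepPattern P r q i
    · exact ⟨i, hi, rfl⟩
    · refine ⟨j, Or.inl (by rw [Nat.mod_eq_of_lt hjP]; omega), ?_⟩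
      have : i ≡ 0 [MOD P] := by
        simp only [keepPattern, not_or, not_not] at hi
        simp [Nat.ModEq, hi.1]
      rw [hj, Y.seq_eq_of_modEq this]

/-- A visit at a multiple of `P` is followed by the recurrence of its target within the period,
any other visit by the same visit one period later; neither of these times is ever skipped. -/
theorem CanDropFirst.exists_return (hc : ∀ u v, u ≠ v → 0 ≤ c u v) {Y : CWalk n P}
    (hY : Y.CanDropFirst) (hP : P < 2 * n) (r q x : ℕ) :
    ∃ y, x < y ∧ keepPattern P r q y ∧ Y.seq y = Y.seq x ∧ Y.tt c x y ≤ Y.R c := by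
  obtain ⟨-, j, hj₀, hjP, hj⟩ := hY
  obtain ⟨hlt, hret⟩ := Y.nextVisit_spec (Y.seq 0) 0
  have hle := Y.nextVisit_le hj₀ hj
  by_cases hx : x % P = 0
  · obtain ⟨m, rfl⟩ := Nat.dvd_of_mod_eq_zero hx
    have hper : Periodic Y.seq (P * m) := fun t => by rw [mul_comm, seq_add_mul]
    refine ⟨P * m + Y.nextVisit (Y.seq 0) 0, by omega, Or.inl ?_, ?_, ?_⟩
    · rw [Nat.mul_add_mod, Nat.mod_eq_of_lt (by omega)]
      omega
    · rw [add_comm, hper, hret, ← zero_add (P * m), hper]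
    · have := Y.tt_add_of_periodic (c := c) hper 0 (Y.nextVisit (Y.seq 0) 0)
      rw [zero_add, add_comm] at this
      rw [this]
      exact Y.tt_nextVisit_le_R hc 0
  · refine ⟨x + P, by omega, Or.inl (by rwa [Nat.add_mod_right]), Y.periodic x, ?_⟩
    rw [tt_window]
    exact Y.duration_le_R hc hP

theorem exists_shortcut (htri : ∀ u v w, c u w ≤ c u v + c v w) (hn : 3 ≤ n) {m : ℕ}
    (hm : n ≤ m) (W : CWalk n (m + 1)) : ∃ V : CWalk n m, V.duration c ≤ W.duration c := by
  obtain ⟨s, hs⟩ := W.exists_rot_canDropFirst hn (by omega)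
  obtain ⟨V, hV⟩ := hs.exists_walk (k := m) (r := 0) (q := 1) zero_le_one (by simp) (by omega)
  set φ := Nat.nth (keepPattern (m + 1) 0 1)
  have hinf := infinite_keepPattern (P := m + 1) (by omega) 0 1
  have hperiod : φ m = φ 0 + (m + 1) := by
    have := Nat.nth_add_count_of_periodic (keepPattern_periodic (m + 1) 0 1) hinf 0
    rwa [count_keepPattern (by omega) zero_le_one, mul_one, zero_add, Nat.add_sub_cancel,
      mul_one, add_zero] at this
  refine ⟨V, ?_⟩
  calc V.duration c ≤ (W.rot s).tt c (φ 0) (φ m) :=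
        tt_le_tt_of_seq_eq_comp htri (Nat.nth_strictMono hinf) hV (Nat.zero_le m)
    _ = W.duration c := by rw [hperiod, tt_window, duration_rot]

theorem exists_shortcut_of_le (htri : ∀ u v w, c u w ≤ c u v + c v w) (hn : 3 ≤ n) {m₀ m : ℕ}
    (hm₀ : n ≤ m₀) (hm : m₀ ≤ m) (W : CWalk n m) :
    ∃ V : CWalk n m₀, V.duration c ≤ W.duration c := by
  induction m, hm using Nat.le_induction with
  | base => exact ⟨W, le_rfl⟩
  | succ m hm ih =>
    obtain ⟨V, hV⟩ := exists_shortcut htri hn (by omega) W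
    obtain ⟨U, hU⟩ := ih V
    exact ⟨U, hU.trans hV⟩

theorem exists_walk_R_le (hc : ∀ u v, u ≠ v → 0 ≤ c u v)
    (htri : ∀ u v w, c u w ≤ c u v + c v w) (hn : 3 ≤ n) (hk : n ^ 2 - n ≤ k)
    (Y : CWalk n (n + 1)) : ∃ Z : CWalk n k, Z.R c ≤ Y.R c := by
  obtain ⟨s, hs⟩ := Y.exists_rot_canDropFirst hn (Nat.lt_add_one n)
  have hrq : k % n ≤ k / n := by
    have : n - 1 ≤ k / n :=
      (Nat.le_div_iff_mul_le (by omega)).2 (by rwa [Nat.sub_one_mul, ← sq])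
    have := Nat.mod_lt k (by omega : 0 < n)
    omega
  have hk₀ : 0 < k := by
    have : 3 * n ≤ n ^ 2 := by nlinarith
    omega
  obtain ⟨Z, hZ⟩ := hs.exists_walk hrq (by rw [Nat.add_sub_cancel, Nat.div_add_mod]) hk₀
  refine ⟨Z, le_trans ?_ (Y.R_rot_le hc s)⟩
  exact R_le_of_seq_eq_nth hc htri (infinite_keepPattern (by omega) _ _) hZ
    (hs.exists_return hc (by omega) _ _)

theorem seq_add_two (W : CWalk 2 k) (i : ℕ) : W.seq (i + 2) = W.seq i := by
  have key : ∀ a b d : Fin 2, a ≠ b → b ≠ d → d = a := by decide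
  exact key _ _ _ (W.step i) (W.step (i + 1))

theorem two_dvd (W : CWalk 2 k) : 2 ∣ k := by
  by_contra h
  have hper : Periodic W.seq 2 := W.seq_add_two
  have h₁ : W.seq k = W.seq 1 := by
    rw [← hper.map_mod_nat, Nat.two_dvd_ne_zero.1 h]
  exact W.step 0 ((W.periodic 0).symm.trans (by rwa [zero_add]))

end CWalk

section LowerBounds

variable {n k : ℕ} {c : Fin n → Fin n → ℝ}

theorem TSPstar_le_R (hc : ∀ u v, u ≠ v → 0 ≤ c u v) (htri : ∀ u v w, c u w ≤ c u v + c v w)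
    (hn : 2 ≤ n) (W : CWalk n k) : TSPstar n c ≤ W.R c := by
  rcases hn.eq_or_lt with rfl | hn
  · -- no visit can be skipped here, but the walk alternates and its first two visits form a tour
    have hcov : ∀ d, ∃ t, 0 ≤ t ∧ t < 0 + 2 ∧ W.seq t = d := fun d => by
      have key : ∀ a b d : Fin 2, a ≠ b → a = d ∨ b = d := by decide
      rcases key _ _ d (W.step 0) with h | h
      exacts [⟨0, le_rfl, by omega, h⟩, ⟨1, by omega, by omega, h⟩]
    obtain ⟨V, hV⟩ := W.exists_walk_duration_le_R hc two_pos (W.seq_add_two 0)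
      (fun t h₁ h₂ => by
        obtain rfl : t = 1 := by omega
        exact (W.step 0).symm) hcov
    exact (TSPstar_le_duration hc V).trans hV
  · obtain ⟨L, hnL, -, V, hV⟩ := W.exists_return_trip_duration_le_R hc
    obtain ⟨U, hU⟩ := V.exists_shortcut_of_le htri hn le_rfl hnL
    exact (TSPstar_le_duration hc U).trans (hU.trans hV)

theorem Rstar_succ_le_R (hc : ∀ u v, u ≠ v → 0 ≤ c u v)
    (htri : ∀ u v w, c u w ≤ c u v + c v w) (hn : 3 ≤ n) (hk : ¬ n ∣ k) (W : CWalk n k) :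
    Rstar n c (n + 1) ≤ W.R c := by
  obtain ⟨L, hnL, hdvd, V, hV⟩ := W.exists_return_trip_duration_le_R hc
  obtain ⟨U, hU⟩ := V.exists_shortcut_of_le htri hn n.le_succ
    (by by_contra h; exact hk (hdvd (by omega)))
  calc Rstar n c (n + 1) ≤ U.R c := Rstar_le_R hc U
    _ ≤ U.duration c := U.R_le_duration hc
    _ ≤ W.R c := hU.trans hV

end LowerBounds

namespace CWalk

variable {n k : ℕ}

def cycle (hn : 2 ≤ n) : CWalk n n :=
  ofPeriodic (fun i => ⟨i % n, Nat.mod_lt i (by omega)⟩) (by omega) (fun i => by simp)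
    (fun i h => Nat.not_modEq_of_lt_of_lt_add (lt_add_one i) (by omega : i + 1 < i + n)
      (congrArg Fin.val h).symm)
    (fun d => ⟨d, Fin.ext (Nat.mod_eq_of_lt d.isLt)⟩)

def cycleSucc (hn : 3 ≤ n) : CWalk n (n + 1) :=
  ofPeriodic
    (fun i => ⟨if i % (n + 1) = 0 then 1 else i % (n + 1) - 1, by
      have := Nat.mod_lt i (by omega : 0 < n + 1)
      split_ifs <;> omega⟩)
    (by omega) (fun i => by simp)
    (fun i h => by
      have hi := Nat.mod_lt i (by omega : 0 < n + 1)
      have h' := congrArg Fin.val h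
      simp only at h'
      rw [← Nat.mod_add_mod i (n + 1) 1] at h'
      rcases (show i % (n + 1) + 1 ≤ n + 1 by omega).lt_or_eq with h₁ | h₁
      · rw [Nat.mod_eq_of_lt h₁] at h'
        split_ifs at h' <;> omega
      · rw [h₁, Nat.mod_self] at h'
        split_ifs at h' <;> omega)
    (fun d => ⟨d + 1, Fin.ext (by simp [Nat.mod_eq_of_lt (by omega : d.val + 1 < n + 1)])⟩)

def lift (W : CWalk n k) {b : ℕ} (h : k ∣ b) (hb : 0 < b) : CWalk n b :=
  ofPeriodic W.seq hb (by obtain ⟨m, rfl⟩ := h; exact fun t => by rw [mul_comm, seq_add_mul])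
    W.step (fun d => by obtain ⟨i, -, hi⟩ := W.covers d; exact ⟨i, hi⟩)

end CWalk

/-- for `k ≥ n² - n` the optimal revisit time is bi-modal:
`R*(k) = R*(n) = TSP*` if `n ∣ k`, and `R*(k) = R*(n+1)` otherwise. -/
theorem Rstar_bimodal
    (n k : ℕ) (hn : 2 ≤ n) (hk : n ^ 2 - n ≤ k)
    (c : Fin n → Fin n → ℝ)
    (hc : ∀ u v : Fin n, u ≠ v → 0 < c u v)
    (htri : ∀ u v w : Fin n, c u w ≤ c u v + c v w) :
    (n ∣ k → Rstar n c k = Rstar n c n ∧ Rstar n c n = TSPstar n c) ∧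
    (¬ n ∣ k → Rstar n c k = Rstar n c (n + 1)) := by
  have hc₀ : ∀ u v : Fin n, u ≠ v → 0 ≤ c u v := fun u v h => (hc u v h).le
  refine ⟨fun hdvd => ?_, fun hndvd => ?_⟩
  · have hk₀ : 0 < k := by
      have : 2 * n ≤ n ^ 2 := by nlinarith
      omega
    refine ⟨le_antisymm ?_ ?_, Rstar_self_eq_TSPstar hc₀⟩
    · exact Rstar_le_Rstar hc₀ (CWalk.cycle hn) fun W => ⟨W.lift hdvd hk₀, le_rfl⟩
    · rw [Rstar_self_eq_TSPstar hc₀]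
      exact le_Rstar ((CWalk.cycle hn).lift hdvd hk₀) (TSPstar_le_R hc₀ htri hn)
  · rcases hn.eq_or_lt with rfl | hn
    · -- no walk on two targets has an odd number of visits: both sides are `sInf ∅ = 0`
      have : IsEmpty (CWalk 2 k) := ⟨fun W => hndvd W.two_dvd⟩
      have : IsEmpty (CWalk 2 (2 + 1)) := ⟨fun W => absurd W.two_dvd (by decide)⟩
      rw [Rstar_of_isEmpty, Rstar_of_isEmpty]
    · obtain ⟨Z₀, -⟩ := CWalk.exists_walk_R_le hc₀ htri hn hk (CWalk.cycleSucc hn)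
      exact le_antisymm (Rstar_le_Rstar hc₀ (CWalk.cycleSucc hn)
        (CWalk.exists_walk_R_le hc₀ htri hn hk)) (le_Rstar Z₀ (Rstar_succ_le_R hc₀ htri hn hndvd))
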